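/- arXiv:1110.4302 — 3 statements merged into one kernel-verified Lean document; each statement's English description precedes it below -/
import Mathlib

section
/- Let G be a connected graph, let a ∈ ℝ^L have all components strictly positive with Γ·a = c·𝟙 for some c > 0, and set N = κ + c. Define P(a) = (1/c)·Γ·d(a), where d(a) is the diagonal matrix with diagonal a. Then: (1) P(a) is a row-stochastic matrix (nonnegative entries, each row summing to 1); (2) all eigenvalues of P(a) are real and lie in [−1, 1], and 1 is an eigenvalue; (3) the spectrum of the matrix J = (1/N²)·d(a)·Γ·( c·I − d(a)·Γ ) is { (c²/N²)·β·(1−β) : β an eigenvalue of P(a) }; consequently all eigenvalues of J are real and they are all ≤ 0 if and only if every eigenvalue β of P(a) with β ≠ 1 satisfies β ≤ 0. -/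
open Finset Filter

/-- `auxN G κ a i = κ + ∑_{j ~ i} a_j`. -/
noncomputable def auxN {L : ℕ} (G : SimpleGraph (Fin L)) [DecidableRel G.Adj] (κ : ℝ)
    (a : Fin L → ℝ) (i : Fin L) : ℝ :=
  κ + ∑ j ∈ G.neighborFinset i, a j

/-- The auxin transport vector field
`f_i(a) = D·∑_{k ~ i}(a_k − a_i) + T·∑_{k ~ i}(a_k·a_i/N_k(a) − a_i·a_k/N_i(a))`. -/
noncomputable def auxF {L : ℕ} (G : SimpleGraph (Fin L)) [DecidableRel G.Adj] (κ D T : ℝ)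
    (a : Fin L → ℝ) (i : Fin L) : ℝ :=
  D * ∑ k ∈ G.neighborFinset i, (a k - a i) +
    T * ∑ k ∈ G.neighborFinset i,
      (a k * a i / auxN G κ a k - a i * a k / auxN G κ a i)

/-! `P = (1/c)·Γ·d(a)` is row-stochastic because `Γ a = c 𝟙`, so Gershgorin's theorem puts its
spectrum in the closed unit disc. It is also reversible: `d(a)·P = (1/c)·d(a)·Γ·d(a)` is symmetric,
so for an eigenpair `P v = μ v` the weighted form `⟨v, d(a) P v⟩ = μ ⟨v, d(a) v⟩` is real with a
positive second factor, and `μ` is real. As `Γ` is symmetric, `d(a)·Γ = c·Pᵀ`, hence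
`J = (c²/N²)·Pᵀ(1 − Pᵀ)`; the spectral mapping theorem for the polynomial `(c²/N²) X (1 − X)` and
`spec Pᵀ = spec P` give `spec J`. Finally, for `β ≤ 1`, `β(1 − β) ≤ 0` iff `β = 1` or `β ≤ 0`. -/

open Matrix ComplexOrder

theorem spectrum_smul_mul_one_sub {𝕜 A : Type*} [Field 𝕜] [IsAlgClosed 𝕜] [Ring A]
    [Algebra 𝕜 A] (a : A) {k : 𝕜} (hk : k ≠ 0) :
    spectrum 𝕜 (k • (a * (1 - a))) = (fun μ => k * μ * (1 - μ)) '' spectrum 𝕜 a := by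
  open Polynomial in
  have hdeg : 0 < (C k * (X * (1 - X))).degree := by
    rw [degree_C_mul hk, degree_mul, degree_X, ← neg_sub, degree_neg, ← C_1, degree_X_sub_C]
    decide
  convert spectrum.map_polynomial_aeval_of_degree_pos a _ hdeg using 2
  · simp [Algebra.smul_def]
  · simp [mul_assoc]

namespace Matrix

variable {n : Type*} [Fintype n] [DecidableEq n]

theorem spectrum_transpose {K : Type*} [Field K] (A : Matrix n n K) :
    spectrum K Aᵀ = spectrum K A := by
  ext μ
  simp only [mem_spectrum_iff_isRoot_charpoly, charpoly_transpose]

theorem mem_spectrum_iff_exists_mulVec_eq_smul {K : Type*} [Field K] {A : Matrix n n K} {μ : K} :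
    μ ∈ spectrum K A ↔ ∃ v ≠ 0, A *ᵥ v = μ • v := by
  rw [← spectrum_toLin', ← Module.End.hasEigenvalue_iff_mem_spectrum]
  refine ⟨fun h => ?_, fun ⟨v, hv, hAv⟩ => ?_⟩
  · obtain ⟨v, hv⟩ := h.exists_hasEigenvector
    exact ⟨v, hv.2, by simpa using hv.apply_eq_smul⟩
  · exact Module.End.hasEigenvalue_of_hasEigenvector
      (Module.End.hasEigenvector_iff.mpr ⟨by simpa using hAv, hv⟩)

theorem norm_le_one_of_mem_spectrum_of_mem_rowStochastic {A : Matrix n n ℝ}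
    (hA : A ∈ rowStochastic ℝ n) {μ : ℂ} (hμ : μ ∈ spectrum ℂ (A.map Complex.ofReal)) : ‖μ‖ ≤ 1 := by
  rw [← spectrum_toLin', ← Module.End.hasEigenvalue_iff_mem_spectrum] at hμ
  obtain ⟨k, hk⟩ := eigenvalue_mem_ball hμ
  have hradius : ∑ j ∈ Finset.univ.erase k, ‖(A k j : ℂ)‖ = 1 - A k k := by
    simp only [Complex.norm_real, Real.norm_of_nonneg (nonneg_of_mem_rowStochastic hA)]
    rw [Finset.sum_erase_eq_sub (Finset.mem_univ k), sum_row_of_mem_rowStochastic hA]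
  simp only [map_apply] at hk
  rw [hradius, mem_closedBall_iff_norm] at hk
  calc ‖μ‖ ≤ ‖μ - A k k‖ + ‖(A k k : ℂ)‖ := norm_le_norm_sub_add _ _
    _ ≤ 1 := by
      rw [Complex.norm_real, Real.norm_of_nonneg (nonneg_of_mem_rowStochastic hA)]
      linarith

theorem one_mem_spectrum_of_mem_rowStochastic [Nonempty n] {A : Matrix n n ℝ}
    (hA : A ∈ rowStochastic ℝ n) : (1 : ℂ) ∈ spectrum ℂ (A.map Complex.ofReal) := by
  refine mem_spectrum_iff_exists_mulVec_eq_smul.mpr ⟨1, one_ne_zero, ?_⟩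
  have := congrArg (fun v => Complex.ofReal ∘ v) (one_vecMul_of_mem_rowStochastic hA)
  ext i
  simpa [mulVec, dotProduct] using congrFun this i

theorem im_eq_zero_of_mem_spectrum_of_isSymm_diagonal_mul {A : Matrix n n ℝ} {w : n → ℝ}
    (hw : ∀ i, 0 < w i) (hA : (diagonal w * A).IsSymm) {μ : ℂ}
    (hμ : μ ∈ spectrum ℂ (A.map Complex.ofReal)) : μ.im = 0 := by
  obtain ⟨v, hv, hAv⟩ := mem_spectrum_iff_exists_mulVec_eq_smul.mp hμ
  set W : Matrix n n ℂ := diagonal fun i => (w i : ℂ)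
  have hW : W.PosDef := posDef_diagonal_iff.mpr fun i => by exact_mod_cast hw i
  have hB : (W * A.map Complex.ofReal).IsHermitian := by
    have : W * A.map Complex.ofReal = (diagonal w * A).map Complex.ofReal := by
      ext i j
      simp [W, diagonal_mul]
    rw [this]
    exact (isHermitian_iff_isSymm.mpr hA).map _ fun _ => by simp
  have hquad : star v ⬝ᵥ (W * A.map Complex.ofReal) *ᵥ v = μ * (star v ⬝ᵥ W *ᵥ v) := by
    rw [← mulVec_mulVec, hAv, mulVec_smul, dotProduct_smul, smul_eq_mul]
  obtain ⟨hpos, hreal⟩ := Complex.pos_iff.mp (hW.dotProduct_mulVec_pos hv)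
  have := hB.im_star_dotProduct_mulVec_self v
  rw [hquad, RCLike.im_to_complex, Complex.mul_im, ← hreal] at this
  simpa [hpos.ne'] using this

theorem exists_real_of_mem_spectrum_of_mem_rowStochastic {A : Matrix n n ℝ}
    (hA : A ∈ rowStochastic ℝ n) {w : n → ℝ} (hw : ∀ i, 0 < w i)
    (hAw : (diagonal w * A).IsSymm) {μ : ℂ} (hμ : μ ∈ spectrum ℂ (A.map Complex.ofReal)) :
    ∃ β : ℝ, μ = β ∧ -1 ≤ β ∧ β ≤ 1 := by
  have hre : μ = μ.re :=
    Complex.ext rfl (im_eq_zero_of_mem_spectrum_of_isSymm_diagonal_mul hw hAw hμ)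
  have hnorm := norm_le_one_of_mem_spectrum_of_mem_rowStochastic hA hμ
  rw [hre, Complex.norm_real, Real.norm_eq_abs] at hnorm
  exact ⟨μ.re, hre, abs_le.mp hnorm⟩

variable {Γ : Matrix n n ℝ} {a : n → ℝ} {c : ℝ}

theorem smul_mul_diagonal_mem_rowStochastic (hΓ : ∀ i j, 0 ≤ Γ i j) (ha : ∀ i, 0 ≤ a i)
    (hc : 0 < c) (hΓa : Γ *ᵥ a = fun _ => c) :
    (1 / c) • (Γ * diagonal a) ∈ rowStochastic ℝ n := by
  refine mem_rowStochastic.mpr ⟨fun i j => ?_, ?_⟩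
  · simp only [smul_apply, mul_diagonal, smul_eq_mul]
    exact mul_nonneg (by positivity) (mul_nonneg (hΓ i j) (ha j))
  · have hdiag : diagonal a *ᵥ 1 = a := by ext; simp [mulVec_diagonal]
    rw [smul_mulVec, ← mulVec_mulVec, hdiag, hΓa]
    ext
    simp [hc.ne']

theorem isSymm_diagonal_mul_smul_mul_diagonal (hΓ : Γ.IsSymm) :
    (diagonal a * ((1 / c) • (Γ * diagonal a))).IsSymm := by
  simp only [IsSymm, transpose_mul, transpose_smul, diagonal_transpose, hΓ.eq, mul_smul_comm,
    mul_assoc]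

end Matrix

theorem mul_mul_one_sub_nonpos_iff {k β : ℝ} (hk : 0 < k) (hβ : β ≤ 1) :
    k * β * (1 - β) ≤ 0 ↔ (β ≠ 1 → β ≤ 0) := by
  refine ⟨fun h hne => ?_, fun h => ?_⟩
  · nlinarith [mul_pos hk (sub_pos.mpr (lt_of_le_of_ne hβ hne))]
  · rcases eq_or_ne β 1 with rfl | hne
    · simp
    · exact mul_nonpos_of_nonpos_of_nonneg (mul_nonpos_of_nonneg_of_nonpos hk.le (h hne))
        (by linarith)

theorem auxin_jacobian_spectrum_general {L : ℕ} (hL : 1 ≤ L) (G : SimpleGraph (Fin L))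
    [DecidableRel G.Adj] (κ : ℝ) (hκ : 0 < κ)
    (a : Fin L → ℝ) (ha : ∀ i, 0 < a i)
    (c : ℝ) (hc : 0 < c) (hca : (G.adjMatrix ℝ).mulVec a = fun _ => c)
    (N : ℝ) (hN : N = κ + c)
    (P J : Matrix (Fin L) (Fin L) ℝ)
    (hP : P = (1 / c) • (G.adjMatrix ℝ * Matrix.diagonal a))
    (hJ : J = (1 / N ^ 2) •
      (Matrix.diagonal a * G.adjMatrix ℝ *
        (c • (1 : Matrix (Fin L) (Fin L) ℝ) - Matrix.diagonal a * G.adjMatrix ℝ))) :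
    (∀ i j, 0 ≤ P i j) ∧ (∀ i, ∑ j, P i j = 1) ∧
    (∀ μ ∈ spectrum ℂ (P.map Complex.ofReal), ∃ β : ℝ, μ = (β : ℂ) ∧ -1 ≤ β ∧ β ≤ 1) ∧
    ((1 : ℂ) ∈ spectrum ℂ (P.map Complex.ofReal)) ∧
    (spectrum ℂ (J.map Complex.ofReal) =
      (fun μ : ℂ => ((c ^ 2 / N ^ 2 : ℝ) : ℂ) * μ * (1 - μ)) ''
        spectrum ℂ (P.map Complex.ofReal)) ∧
    (∀ μ ∈ spectrum ℂ (J.map Complex.ofReal), ∃ r : ℝ, μ = (r : ℂ)) ∧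
    ((∀ μ ∈ spectrum ℂ (J.map Complex.ofReal), μ.re ≤ 0) ↔
      (∀ β ∈ spectrum ℂ (P.map Complex.ofReal), β ≠ 1 → β.re ≤ 0)) := by
  have hN0 : 0 < N := hN ▸ by positivity
  have hk : 0 < c ^ 2 / N ^ 2 := by positivity
  have : Nonempty (Fin L) := ⟨⟨0, hL⟩⟩
  have hΓ : ∀ i j, 0 ≤ G.adjMatrix ℝ i j := fun i j => by
    rw [SimpleGraph.adjMatrix_apply]; split_ifs <;> norm_num
  have hPstoch : P ∈ rowStochastic ℝ (Fin L) :=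
    hP ▸ smul_mul_diagonal_mem_rowStochastic hΓ (fun i => (ha i).le) hc hca
  have hPspec : ∀ μ ∈ spectrum ℂ (P.map Complex.ofReal), ∃ β : ℝ, μ = β ∧ -1 ≤ β ∧ β ≤ 1 :=
    fun μ => exists_real_of_mem_spectrum_of_mem_rowStochastic hPstoch ha
      (hP ▸ isSymm_diagonal_mul_smul_mul_diagonal G.isSymm_adjMatrix)
  have hJP : J = (c ^ 2 / N ^ 2) • (Pᵀ * (1 - Pᵀ)) := by
    have hPT : c • Pᵀ = diagonal a * G.adjMatrix ℝ := by
      simp [hP, transpose_smul, transpose_mul, G.transpose_adjMatrix, smul_smul, hc.ne']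
    rw [hJ, ← hPT, ← smul_sub, smul_mul_smul_comm, smul_smul]
    congr 1
    ring
  have hJspec : spectrum ℂ (J.map Complex.ofReal) =
      (fun μ : ℂ => ((c ^ 2 / N ^ 2 : ℝ) : ℂ) * μ * (1 - μ)) ''
        spectrum ℂ (P.map Complex.ofReal) := by
    have hJmap : J.map Complex.ofReal = ((c ^ 2 / N ^ 2 : ℝ) : ℂ) •
        ((P.map Complex.ofReal)ᵀ * (1 - (P.map Complex.ofReal)ᵀ)) := by
      ext i j
      simp [hJP, mul_apply, one_apply, apply_ite]
    rw [hJmap, spectrum_smul_mul_one_sub _ (by exact_mod_cast hk.ne'), spectrum_transpose]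
  refine ⟨fun _ _ => nonneg_of_mem_rowStochastic hPstoch, sum_row_of_mem_rowStochastic hPstoch,
    hPspec, one_mem_spectrum_of_mem_rowStochastic hPstoch, hJspec, ?_, ?_⟩
  · rw [hJspec]
    rintro _ ⟨μ, hμ, rfl⟩
    obtain ⟨β, rfl, -⟩ := hPspec μ hμ
    exact ⟨c ^ 2 / N ^ 2 * β * (1 - β), by push_cast; ring⟩
  · rw [hJspec, Set.forall_mem_image]
    refine forall₂_congr fun μ hμ => ?_
    obtain ⟨β, rfl, -, hβ⟩ := hPspec μ hμ
    exact_mod_cast mul_mul_one_sub_nonpos_iff hk hβ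

/-- Spectral description of the Jacobian at a positive critical point with
`Γ·a = c·𝟙`, `N = κ + c`. The matrix `P(a) = (1/c)·Γ·d(a)` is row-stochastic, its
eigenvalues are real and lie in `[−1,1]` with `1` an eigenvalue, and the spectrum of the
Jacobian `J = (1/N²)·d(a)·Γ·(c·I − d(a)·Γ)` is `{(c²/N²)·β·(1−β) : β ∈ spec P(a)}`;
consequently the eigenvalues of `J` are real, and all are `≤ 0` iff every eigenvalue
`β ≠ 1` of `P(a)` satisfies `β ≤ 0`. -/
theorem auxin_jacobian_spectrum {L : ℕ} (hL : 1 ≤ L) (G : SimpleGraph (Fin L))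
    [DecidableRel G.Adj] (hG : G.Connected) (κ : ℝ) (hκ : 0 < κ)
    (a : Fin L → ℝ) (ha : ∀ i, 0 < a i)
    (c : ℝ) (hc : 0 < c) (hca : (G.adjMatrix ℝ).mulVec a = fun _ => c)
    (N : ℝ) (hN : N = κ + c)
    (P J : Matrix (Fin L) (Fin L) ℝ)
    (hP : P = (1 / c) • (G.adjMatrix ℝ * Matrix.diagonal a))
    (hJ : J = (1 / N ^ 2) •
      (Matrix.diagonal a * G.adjMatrix ℝ *
        (c • (1 : Matrix (Fin L) (Fin L) ℝ) - Matrix.diagonal a * G.adjMatrix ℝ))) :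
    (∀ i j, 0 ≤ P i j) ∧ (∀ i, ∑ j, P i j = 1) ∧
    (∀ μ ∈ spectrum ℂ (P.map Complex.ofReal), ∃ β : ℝ, μ = (β : ℂ) ∧ -1 ≤ β ∧ β ≤ 1) ∧
    ((1 : ℂ) ∈ spectrum ℂ (P.map Complex.ofReal)) ∧
    (spectrum ℂ (J.map Complex.ofReal) =
      (fun μ : ℂ => ((c ^ 2 / N ^ 2 : ℝ) : ℂ) * μ * (1 - μ)) ''
        spectrum ℂ (P.map Complex.ofReal)) ∧
    (∀ μ ∈ spectrum ℂ (J.map Complex.ofReal), ∃ r : ℝ, μ = (r : ℂ)) ∧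
    ((∀ μ ∈ spectrum ℂ (J.map Complex.ofReal), μ.re ≤ 0) ↔
      (∀ β ∈ spectrum ℂ (P.map Complex.ofReal), β ≠ 1 → β.re ≤ 0)) :=
  auxin_jacobian_spectrum_general hL G κ hκ a ha c hc hca N hN P J hP hJ
end

section
/- Let G be a connected graph and let a ∈ ℝ^L have all components strictly positive with Γ·a = c·𝟙 for some c > 0; set N = κ + c. Suppose there exist vertices i0, i1, i2, i3 such that i1 ~ i0; i2 ~ i1, i2 is not adjacent to i0 and i2 ≠ i0; and i3 ~ i2, i3 is not adjacent to i0 and i3 ≠ i0. Then the critical point a is unstable: the Jacobian matrix (1/N²)·d(a)·Γ·( c·I − d(a)·Γ ) has a real eigenvalue that is strictly positive. -/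
/-!
Write `s = √a`. The matrix `d(a) Γ` is similar, via `d(s)`, to the symmetric nonnegative matrix
`S = d(s) Γ d(s)`, which has the positive eigenvector `s` with eigenvalue `c`. An eigenvector of
`d(a) Γ` with eigenvalue `μ` is one of the Jacobian with eigenvalue `μ (c - μ) / N²`, so it
suffices to find an eigenvalue of `S` in `(0, c)`.

The ground-state identity `2 (c ‖s z‖² - ⟪s z, S (s z)⟫) = ∑ᵢⱼ Sᵢⱼ sᵢ sⱼ (zᵢ - zⱼ)²` shows that all
eigenvalues of `S` are `≤ c`, and that every `c`-eigenvector `w` has `w / s` constant along edges,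
in particular on the path `i0 ~ i1 ~ i2 ~ i3`. The vector
`x = s_{i0} (e_{i2} + e_{i3}) - (s_{i2} + s_{i3}) e_{i0}` is therefore orthogonal to the
`c`-eigenspace, while `⟪x, S x⟫ = 2 s_{i0}² S_{i2 i3} > 0` because `i0` is adjacent to neither
`i2` nor `i3`. Expanding `x` in an orthonormal eigenbasis of `S` gives an eigenvalue in `(0, c)`.
-/

open Finset Filter

open Matrix Module.End
open scoped InnerProductSpace

section Spectral
variable {E : Type*} [NormedAddCommGroup E] [InnerProductSpace ℝ E] [FiniteDimensional ℝ E]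

theorem LinearMap.IsSymmetric.exists_hasEigenvalue_mem_Ioo {T : E →ₗ[ℝ] E}
    (hT : T.IsSymmetric) {c : ℝ} (hle : ∀ y, ⟪T y, y⟫_ℝ ≤ c * ⟪y, y⟫_ℝ) {x : E}
    (hx : x ∈ (eigenspace T c)ᗮ) (hpos : 0 < ⟪T x, x⟫_ℝ) :
    ∃ μ, HasEigenvalue T μ ∧ 0 < μ ∧ μ < c := by
  set b := hT.eigenvectorBasis rfl
  set μ := hT.eigenvalues rfl
  by_contra! h
  have hterm : ∀ i, μ i * ⟪b i, x⟫_ℝ ^ 2 ≤ 0 := by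
    intro i
    rcases le_or_gt (μ i) 0 with hi | hi
    · exact mul_nonpos_of_nonpos_of_nonneg hi (sq_nonneg _)
    have hμc : μ i = c := by
      have := hle (b i)
      rw [hT.apply_eigenvectorBasis, inner_smul_left, real_inner_self_eq_norm_sq,
        b.norm_eq_one] at this
      exact le_antisymm (by simpa using this) (h _ (hT.hasEigenvalue_eigenvalues rfl i) hi)
    have hbi : b i ∈ eigenspace T c :=
      mem_eigenspace_iff.mpr (hμc ▸ hT.apply_eigenvectorBasis rfl i)
    simp [Submodule.inner_right_of_mem_orthogonal hbi hx]
  have hdecomp : ⟪T x, x⟫_ℝ = ∑ i, μ i * ⟪b i, x⟫_ℝ ^ 2 := by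
    rw [← b.sum_inner_mul_inner]
    congr with i
    rw [hT, hT.apply_eigenvectorBasis, inner_smul_right, real_inner_comm]
    simp only [Real.ringHom_apply, μ]
    ring
  exact hpos.not_ge (hdecomp ▸ Finset.sum_nonpos fun i _ => hterm i)

end Spectral

namespace Matrix

variable {n : Type*} [Fintype n] {S : Matrix n n ℝ} {c : ℝ}

theorem IsHermitian.exists_mulVec_eq_smul_of_dotProduct_mulVec_pos [DecidableEq n]
    (hS : S.IsHermitian)
    (hle : ∀ y, y ⬝ᵥ S *ᵥ y ≤ c * (y ⬝ᵥ y)) {x : n → ℝ}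
    (hx : ∀ w, S *ᵥ w = c • w → x ⬝ᵥ w = 0) (hpos : 0 < x ⬝ᵥ S *ᵥ x) :
    ∃ μ v, v ≠ 0 ∧ S *ᵥ v = μ • v ∧ 0 < μ ∧ μ < c := by
  have hT := isSymmetric_toEuclideanLin_iff.mpr hS
  obtain ⟨μ, hμ, hμ0, hμc⟩ := hT.exists_hasEigenvalue_mem_Ioo (c := c) (x := WithLp.toLp 2 x)
    (fun y => by
      simpa only [EuclideanSpace.inner_eq_star_dotProduct, star_trivial, ofLp_toLpLin,
        toLin'_apply, dotProduct_comm] using hle y.ofLp)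
    (fun w hw => by
      rw [mem_eigenspace_iff] at hw
      simpa [EuclideanSpace.inner_eq_star_dotProduct, dotProduct_comm] using
        hx _ (congrArg WithLp.ofLp hw))
    (by simpa [EuclideanSpace.inner_eq_star_dotProduct, dotProduct_comm] using hpos)
  obtain ⟨v, hv, hv0⟩ := hμ.exists_hasEigenvector
  exact ⟨μ, WithLp.ofLp v, by simpa using hv0,
    congrArg WithLp.ofLp (mem_eigenspace_iff.mp hv), hμ0, hμc⟩

variable {s : n → ℝ}

theorem IsSymm.two_mul_sub_dotProduct_mulVec_eq_sum (hS : S.IsSymm) (hSs : S *ᵥ s = c • s)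
    (z : n → ℝ) :
    2 * (c * ((s * z) ⬝ᵥ (s * z)) - (s * z) ⬝ᵥ S *ᵥ (s * z)) =
      ∑ i, ∑ j, S i j * s i * s j * (z i - z j) ^ 2 := by
  have hrow : ∀ i, ∑ j, S i j * s j = c * s i := fun i => congrFun hSs i
  have hleft : ∑ i, ∑ j, S i j * s i * s j * z i ^ 2 = c * ((s * z) ⬝ᵥ (s * z)) := by
    simp only [dotProduct, Pi.mul_apply, Finset.mul_sum]
    refine Finset.sum_congr rfl fun i _ => ?_
    calc ∑ j, S i j * s i * s j * z i ^ 2 = (∑ j, S i j * s j) * (s i * z i ^ 2) := by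
          rw [Finset.sum_mul]; exact Finset.sum_congr rfl fun j _ => by ring
      _ = c * (s i * z i * (s i * z i)) := by rw [hrow]; ring
  have hright : ∑ i, ∑ j, S i j * s i * s j * z j ^ 2 = c * ((s * z) ⬝ᵥ (s * z)) := by
    rw [Finset.sum_comm, ← hleft]
    exact Finset.sum_congr rfl fun i _ => Finset.sum_congr rfl fun j _ => by
      rw [hS.apply i j]; ring
  have hcross : ∑ i, ∑ j, S i j * s i * s j * (z i * z j) = (s * z) ⬝ᵥ S *ᵥ (s * z) := by
    simp only [dotProduct, mulVec, Pi.mul_apply, Finset.mul_sum]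
    exact Finset.sum_congr rfl fun i _ => Finset.sum_congr rfl fun j _ => by ring
  have hexpand : ∑ i, ∑ j, S i j * s i * s j * (z i - z j) ^ 2 =
      ∑ i, ∑ j, S i j * s i * s j * z i ^ 2 + ∑ i, ∑ j, S i j * s i * s j * z j ^ 2 -
        2 * ∑ i, ∑ j, S i j * s i * s j * (z i * z j) := by
    simp only [Finset.mul_sum, ← Finset.sum_add_distrib, ← Finset.sum_sub_distrib]
    exact Finset.sum_congr rfl fun i _ => Finset.sum_congr rfl fun j _ => by ring
  rw [hexpand, hleft, hright, hcross]
  ring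

theorem IsSymm.dotProduct_mulVec_le (hS : S.IsSymm) (hSs : S *ᵥ s = c • s)
    (hs : ∀ i, 0 < s i) (hnn : ∀ i j, 0 ≤ S i j) (x : n → ℝ) :
    x ⬝ᵥ S *ᵥ x ≤ c * (x ⬝ᵥ x) := by
  have hx : s * (x / s) = x := funext fun i => mul_div_cancel₀ _ (hs i).ne'
  have hsum := hS.two_mul_sub_dotProduct_mulVec_eq_sum hSs (x / s)
  rw [hx] at hsum
  have : 0 ≤ ∑ i, ∑ j, S i j * s i * s j * ((x / s) i - (x / s) j) ^ 2 :=
    Finset.sum_nonneg fun i _ => Finset.sum_nonneg fun j _ =>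
      mul_nonneg (mul_nonneg (mul_nonneg (hnn i j) (hs i).le) (hs j).le) (sq_nonneg _)
  linarith

theorem IsSymm.div_eq_div_of_mulVec_eq_smul (hS : S.IsSymm) (hSs : S *ᵥ s = c • s)
    (hs : ∀ i, 0 < s i) (hnn : ∀ i j, 0 ≤ S i j) {w : n → ℝ} (hw : S *ᵥ w = c • w)
    {i j : n} (hij : 0 < S i j) : w i / s i = w j / s j := by
  have hterm_nonneg : ∀ i j, 0 ≤ S i j * s i * s j * ((w / s) i - (w / s) j) ^ 2 := fun i j =>
    mul_nonneg (mul_nonneg (mul_nonneg (hnn i j) (hs i).le) (hs j).le) (sq_nonneg _)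
  have hsum := hS.two_mul_sub_dotProduct_mulVec_eq_sum hSs (w / s)
  rw [show s * (w / s) = w from funext fun i => mul_div_cancel₀ _ (hs i).ne', hw,
    dotProduct_smul, smul_eq_mul, sub_self, mul_zero] at hsum
  have hrow := (Finset.sum_eq_zero_iff_of_nonneg fun i _ =>
    Finset.sum_nonneg fun j _ => hterm_nonneg i j).1 hsum.symm i (Finset.mem_univ _)
  have hij' := (Finset.sum_eq_zero_iff_of_nonneg fun j _ => hterm_nonneg i j).1 hrow j
    (Finset.mem_univ _)
  have hcoef : S i j * s i * s j ≠ 0 := (mul_pos (mul_pos hij (hs i)) (hs j)).ne'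
  simpa [sub_eq_zero] using (mul_eq_zero.mp hij').resolve_left hcoef

end Matrix

namespace SimpleGraph

variable {V : Type*} [Fintype V] [DecidableEq V] (G : SimpleGraph V) [DecidableRel G.Adj]
  (a : V → ℝ)

noncomputable def symmetrizedAdjMatrix : Matrix V V ℝ :=
  diagonal (fun i => √(a i)) * G.adjMatrix ℝ * diagonal (fun i => √(a i))

variable {G a}

theorem symmetrizedAdjMatrix_apply (i j : V) :
    G.symmetrizedAdjMatrix a i j = √(a i) * G.adjMatrix ℝ i j * √(a j) := by
  rw [symmetrizedAdjMatrix, mul_diagonal, diagonal_mul]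

theorem isSymm_symmetrizedAdjMatrix : (G.symmetrizedAdjMatrix a).IsSymm :=
  IsSymm.ext fun i j => by
    simp only [symmetrizedAdjMatrix_apply, adjMatrix_apply, G.adj_comm]
    ring

theorem symmetrizedAdjMatrix_nonneg (i j : V) : 0 ≤ G.symmetrizedAdjMatrix a i j := by
  rw [symmetrizedAdjMatrix_apply, adjMatrix_apply]
  split_ifs <;> positivity

theorem symmetrizedAdjMatrix_pos_of_adj (ha : ∀ i, 0 < a i) {i j : V} (hij : G.Adj i j) :
    0 < G.symmetrizedAdjMatrix a i j := by
  rw [symmetrizedAdjMatrix_apply, adjMatrix_apply, if_pos hij, mul_one]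
  exact mul_pos (Real.sqrt_pos.mpr (ha i)) (Real.sqrt_pos.mpr (ha j))

theorem symmetrizedAdjMatrix_mulVec_sqrt (ha : ∀ i, 0 ≤ a i) {c : ℝ}
    (hca : G.adjMatrix ℝ *ᵥ a = fun _ => c) :
    G.symmetrizedAdjMatrix a *ᵥ (fun i => √(a i)) = c • fun i => √(a i) := by
  have hsq : diagonal (fun i => √(a i)) *ᵥ (fun i => √(a i)) = a :=
    funext fun i => by simp [mulVec_diagonal, Real.mul_self_sqrt (ha i)]
  rw [symmetrizedAdjMatrix, ← mulVec_mulVec, hsq, ← mulVec_mulVec, hca]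
  funext i
  simp [mulVec_diagonal, mul_comm]

theorem exists_diagonal_mul_adjMatrix_mulVec_eq_smul (ha : ∀ i, 0 < a i) {μ : ℝ}
    {v : V → ℝ} (hv0 : v ≠ 0) (hv : G.symmetrizedAdjMatrix a *ᵥ v = μ • v) :
    ∃ w ≠ 0, (diagonal a * G.adjMatrix ℝ) *ᵥ w = μ • w := by
  have hsq : diagonal (fun i => √(a i)) * diagonal (fun i => √(a i)) = diagonal a := by
    rw [diagonal_mul_diagonal]
    exact congrArg diagonal (funext fun i => Real.mul_self_sqrt (ha i).le)
  have hconj : diagonal a * G.adjMatrix ℝ * diagonal (fun i => √(a i)) =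
      diagonal (fun i => √(a i)) * G.symmetrizedAdjMatrix a := by
    simp only [symmetrizedAdjMatrix, ← hsq, Matrix.mul_assoc]
  refine ⟨diagonal (fun i => √(a i)) *ᵥ v, fun hw => hv0 (funext fun i => ?_), ?_⟩
  · simpa [mulVec_diagonal, (Real.sqrt_pos.mpr (ha i)).ne'] using congrFun hw i
  · rw [mulVec_mulVec, hconj, ← mulVec_mulVec, hv, mulVec_smul]

theorem exists_dotProduct_symmetrizedAdjMatrix_mulVec_pos (ha : ∀ i, 0 < a i) {c : ℝ}
    (hca : G.adjMatrix ℝ *ᵥ a = fun _ => c) {i0 i1 i2 i3 : V} (h1 : G.Adj i0 i1)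
    (h2 : G.Adj i1 i2) (h2' : ¬ G.Adj i0 i2)
    (h3 : G.Adj i2 i3) (h3' : ¬ G.Adj i0 i3) :
    ∃ x, 0 < x ⬝ᵥ G.symmetrizedAdjMatrix a *ᵥ x ∧
      ∀ w, G.symmetrizedAdjMatrix a *ᵥ w = c • w → x ⬝ᵥ w = 0 := by
  have hs : ∀ i, 0 < √(a i) := fun i => Real.sqrt_pos.mpr (ha i)
  set x : V → ℝ :=
    √(a i0) • (Pi.single i2 1 + Pi.single i3 1) - (√(a i2) + √(a i3)) • Pi.single i0 1 with hx
  refine ⟨x, ?_, fun w hw => ?_⟩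
  · have hn20 : ¬ G.Adj i2 i0 := fun h => h2' h.symm
    have hn30 : ¬ G.Adj i3 i0 := fun h => h3' h.symm
    have hval : x ⬝ᵥ G.symmetrizedAdjMatrix a *ᵥ x = 2 * (√(a i0) ^ 2 * (√(a i2) * √(a i3))) := by
      simp only [hx, smul_add, mulVec_sub, mulVec_add, mulVec_smul, mulVec_single,
        MulOpposite.op_one, one_smul, dotProduct_sub, dotProduct_add, dotProduct_smul,
        sub_dotProduct, add_dotProduct, smul_dotProduct, single_dotProduct, col_apply,
        symmetrizedAdjMatrix_apply, adjMatrix_apply, SimpleGraph.irrefl, ↓reduceIte, mul_zero,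
        zero_mul, smul_eq_mul, h3.symm, mul_one, one_mul, zero_add, h2', sub_zero, h3, add_zero,
        h3', hn20, hn30, sub_self]
      ring
    rw [hval]
    exact mul_pos two_pos (mul_pos (pow_pos (hs i0) 2) (mul_pos (hs i2) (hs i3)))
  · have hratio : ∀ {i j}, G.Adj i j → w i / √(a i) = w j / √(a j) := fun hij =>
      IsSymm.div_eq_div_of_mulVec_eq_smul isSymm_symmetrizedAdjMatrix
        (symmetrizedAdjMatrix_mulVec_sqrt (fun i => (ha i).le) hca) hs
        symmetrizedAdjMatrix_nonneg hw (symmetrizedAdjMatrix_pos_of_adj ha hij)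
    have h02 := (hratio h1).trans (hratio h2)
    have h03 := h02.trans (hratio h3)
    rw [div_eq_div_iff (hs i0).ne' (hs i2).ne'] at h02
    rw [div_eq_div_iff (hs i0).ne' (hs i3).ne'] at h03
    simp only [hx, smul_add, sub_dotProduct, add_dotProduct, smul_dotProduct, single_dotProduct,
      one_mul, smul_eq_mul]
    linear_combination -h02 - h03

end SimpleGraph

theorem Matrix.smul_mul_sub_mulVec_eq_of_mulVec_eq_smul {n R : Type*} [Fintype n]
    [DecidableEq n] [CommRing R] {B : Matrix n n R} {v : n → R} {μ : R} (h : B *ᵥ v = μ • v)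
    (k c : R) : (k • (B * (c • 1 - B))) *ᵥ v = (k * (μ * (c - μ))) • v := by
  rw [smul_mulVec, ← mulVec_mulVec, sub_mulVec, smul_mulVec, one_mulVec, h, mulVec_sub,
    mulVec_smul, mulVec_smul, h]
  module

theorem auxin_instability_path_general {L : ℕ} (G : SimpleGraph (Fin L))
    [DecidableRel G.Adj] (κ : ℝ) (hκ : 0 < κ)
    (a : Fin L → ℝ) (ha : ∀ i, 0 < a i)
    (c : ℝ) (hca : (G.adjMatrix ℝ).mulVec a = fun _ => c)
    (N : ℝ) (hN : N = κ + c)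
    (i0 i1 i2 i3 : Fin L)
    (h1 : G.Adj i0 i1)
    (h2 : G.Adj i1 i2) (h2' : ¬ G.Adj i0 i2)
    (h3 : G.Adj i2 i3) (h3' : ¬ G.Adj i0 i3) :
    ∃ r : ℝ, 0 < r ∧
      Module.End.HasEigenvalue
        (Matrix.mulVecLin
          ((1 / N ^ 2) •
            (Matrix.diagonal a * G.adjMatrix ℝ *
              (c • (1 : Matrix (Fin L) (Fin L) ℝ) -
                Matrix.diagonal a * G.adjMatrix ℝ)))) r := by
  obtain ⟨x, hxpos, hxorth⟩ :=
    SimpleGraph.exists_dotProduct_symmetrizedAdjMatrix_mulVec_pos ha hca h1 h2 h2' h3 h3'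
  have hS : (G.symmetrizedAdjMatrix a).IsSymm := SimpleGraph.isSymm_symmetrizedAdjMatrix
  have hle := hS.dotProduct_mulVec_le
    (SimpleGraph.symmetrizedAdjMatrix_mulVec_sqrt (fun i => (ha i).le) hca)
    (fun i => Real.sqrt_pos.mpr (ha i)) SimpleGraph.symmetrizedAdjMatrix_nonneg
  obtain ⟨μ, v, hv0, hSv, hμ0, hμc⟩ :=
    (isHermitian_iff_isSymm.mpr hS).exists_mulVec_eq_smul_of_dotProduct_mulVec_pos hle hxorth hxpos
  obtain ⟨w, hw0, hBw⟩ := SimpleGraph.exists_diagonal_mul_adjMatrix_mulVec_eq_smul ha hv0 hSv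
  refine ⟨1 / N ^ 2 * (μ * (c - μ)), ?_,
    hasEigenvalue_of_hasEigenvector ⟨mem_eigenspace_iff.mpr ?_, hw0⟩⟩
  · have hN0 : 0 < N := by linarith
    have hμc' : 0 < c - μ := by linarith
    positivity
  · rw [mulVecLin_apply]
    exact smul_mul_sub_mulVec_eq_of_mulVec_eq_smul hBw _ _

/-- Instability criterion. If a connected graph contains a path
`i0 ~ i1 ~ i2 ~ i3` with `i2, i3` neither adjacent nor equal to `i0`, then any positive
critical point `a` with `Γ·a = c·𝟙` is unstable: the Jacobian
`(1/N²)·d(a)·Γ·(c·I − d(a)·Γ)` with `N = κ + c` has a strictly positive real eigenvalue. -/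
theorem auxin_instability_path {L : ℕ} (hL : 1 ≤ L) (G : SimpleGraph (Fin L))
    [DecidableRel G.Adj] (hG : G.Connected) (κ : ℝ) (hκ : 0 < κ)
    (a : Fin L → ℝ) (ha : ∀ i, 0 < a i)
    (c : ℝ) (hc : 0 < c) (hca : (G.adjMatrix ℝ).mulVec a = fun _ => c)
    (N : ℝ) (hN : N = κ + c)
    (i0 i1 i2 i3 : Fin L)
    (h1 : G.Adj i0 i1)
    (h2 : G.Adj i1 i2) (h2' : ¬ G.Adj i0 i2) (h2'' : i2 ≠ i0)
    (h3 : G.Adj i2 i3) (h3' : ¬ G.Adj i0 i3) (h3'' : i3 ≠ i0) :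
    ∃ r : ℝ, 0 < r ∧
      Module.End.HasEigenvalue
        (Matrix.mulVecLin
          ((1 / N ^ 2) •
            (Matrix.diagonal a * G.adjMatrix ℝ *
              (c • (1 : Matrix (Fin L) (Fin L) ℝ) -
                Matrix.diagonal a * G.adjMatrix ℝ)))) r :=
  auxin_instability_path_general G κ hκ a ha c hca N hN i0 i1 i2 i3 h1 h2 h2' h3 h3'
end

section
/- Let L ≥ 3 and let G be the cycle graph on the vertex set ZMod L (i ~ j if and only if j = i + 1 or j = i − 1). Fix ρ > 0 and suppose a ∈ ℝ^{ZMod L} satisfies a_i > 0 for all i, ∑_i a_i = ρ·L, and there is a constant c with a_{i−1} + a_{i+1} = c for all i (i.e. Γ·a = c·𝟙). Then: (1) if L is not a multiple of 4, a is the uniform configuration a_i = ρ for all i; (2) if L is a multiple of 4, then c = 2ρ and a_{i+2} = 2ρ − a_i for every i (so a is determined by a_1, a_2 ∈ (0, 2ρ) and is 4-periodic). -/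
open Finset

/-- Positive critical points of the pure transport process on the cycle
`ZMod L`, `L ≥ 3`: if `a > 0`, `∑ a_i = ρL` and `a_{i−1} + a_{i+1} = c` for all `i`, then
if `4 ∤ L` the configuration is uniform (`a_i = ρ`), and if `4 ∣ L` then `c = 2ρ` and
`a_{i+2} = 2ρ − a_i` for all `i`. -/
theorem auxin_critical_cycle {L : ℕ} [NeZero L] (hL : 3 ≤ L)
    (ρ c : ℝ) (hρ : 0 < ρ)
    (a : ZMod L → ℝ) (ha : ∀ i, 0 < a i)
    (hsum : ∑ i, a i = ρ * L)
    (hc : ∀ i : ZMod L, a (i - 1) + a (i + 1) = c) :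
    (¬ (4 ∣ L) → ∀ i, a i = ρ) ∧
    ((4 ∣ L) → c = 2 * ρ ∧ ∀ i : ZMod L, a (i + 2) = 2 * ρ - a i) := by
  have hLR : (L : ℝ) ≠ 0 := by positivity
  -- c = 2ρ
  have h1 : ∑ i : ZMod L, (a (i - 1) + a (i + 1)) = L * c := by
    rw [Finset.sum_congr rfl fun i _ => hc i, Finset.sum_const, Finset.card_univ,
      ZMod.card, nsmul_eq_mul]
  have h2 : ∑ i : ZMod L, a (i - 1) = ∑ i, a i :=
    Fintype.sum_equiv (Equiv.subRight (1 : ZMod L)) _ _ (fun i => rfl)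
  have h3 : ∑ i : ZMod L, a (i + 1) = ∑ i, a i :=
    Fintype.sum_equiv (Equiv.addRight (1 : ZMod L)) _ _ (fun i => rfl)
  have hsum2 : ∑ i : ZMod L, (a (i - 1) + a (i + 1)) = 2 * (ρ * L) := by
    rw [Finset.sum_add_distrib, h2, h3, hsum]; ring
  have hce : c = 2 * ρ := by
    have h5 : (L:ℝ) * c = (L:ℝ) * (2 * ρ) := by rw [← h1, hsum2]; ring
    exact mul_left_cancel₀ hLR h5
  subst hce
  have key : ∀ i : ZMod L, a (i + 2) = 2 * ρ - a i := by
    intro i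
    have := hc (i + 1)
    have e1 : i + 1 - 1 = i := by ring
    have e2 : i + 1 + 1 = i + 2 := by ring
    rw [e1, e2] at this
    linarith
  refine ⟨?_, fun _ => ⟨rfl, key⟩⟩
  intro h4 i
  -- periodicity: a (i + 2k) = a i for even k, 2ρ - a i for odd k
  have iter : ∀ k : ℕ, ∀ i : ZMod L, a (i + ((2 * (2 * k + 1) : ℕ) : ZMod L)) = 2 * ρ - a i := by
    intro k
    induction k with
    | zero => intro i; have := key i; push_cast; simpa using this
    | succ n ih =>
      intro i
      have e : i + ((2 * (2 * (n + 1) + 1) : ℕ) : ZMod L)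
          = (i + 2 + 2) + ((2 * (2 * n + 1) : ℕ) : ZMod L) := by
        push_cast; ring
      rw [e, ih, key, key]
      ring
  obtain ⟨m, hm⟩ | hodd := Nat.even_or_odd L
  · -- L = 2m, m odd since 4 ∤ L
    have hmodd : Odd m := by
      rcases Nat.even_or_odd m with ⟨t, ht⟩ | h
      · exact absurd ⟨t, by omega⟩ h4
      · exact h
    obtain ⟨k, hk⟩ := hmodd
    have hz : ((2 * (2 * k + 1) : ℕ) : ZMod L) = 0 := by
      have : 2 * (2 * k + 1) = L := by omega
      rw [this, ZMod.natCast_self]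
    have := iter k i
    rw [hz, add_zero] at this
    linarith
  · obtain ⟨k, hk⟩ := hodd
    have hz : ((2 * (2 * k + 1) : ℕ) : ZMod L) = 0 := by
      have e : 2 * (2 * k + 1) = L + L := by omega
      rw [e]; push_cast [ZMod.natCast_self]; ring
    have := iter k i
    rw [hz, add_zero] at this
    linarith
end
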